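/- Let k₁₋, k₁₊, k₂₋, k₂₊, ν be positive real numbers and define K₁±, K₂± as above. For each natural number n set pₙ = ((K₂₋)_n (K₂₊)_n)/((K₁₋)_n (K₁₊)_n) · (νⁿ/n!) · ₂F₂({K₂₋+n, K₂₊+n},{K₁₋+n, K₁₊+n}, −ν). Then Σ_{n=0}^∞ pₙ = 1. -/

import Mathlib

/-- The Pochhammer symbol (a)ₖ = a(a+1)⋯(a+k−1) for a real parameter. -/
noncomputable def poch (a : ℝ) (k : ℕ) : ℝ := (ascPochhammer ℝ k).eval a

/-- The generalized hypergeometric function ₂F₂({a₁,a₂},{b₁,b₂},x). -/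
noncomputable def F22 (a₁ a₂ b₁ b₂ x : ℝ) : ℝ :=
  ∑' k : ℕ, (poch a₁ k * poch a₂ k) / (poch b₁ k * poch b₂ k) * x ^ k / (Nat.factorial k)

lemma poch_zero (a : ℝ) : poch a 0 = 1 := by simp [poch]

lemma poch_pos {a : ℝ} (ha : 0 < a) (n : ℕ) : 0 < poch a n := by
  induction n with
  | zero => simp [poch]
  | succ n ih =>
    rw [poch, ascPochhammer_succ_eval]
    have : (0:ℝ) < a + n := by positivity
    exact mul_pos ih this

lemma poch_add (a : ℝ) (n k : ℕ) : poch a (n + k) = poch a n * poch (a + n) k := by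
  rw [poch, poch, poch, ← ascPochhammer_mul, Polynomial.eval_mul, Polynomial.eval_comp]
  simp

set_option maxHeartbeats 1000000 in
/-- The steady-state mRNA probabilities pₙ of the three-state gene model
sum to one: Σₙ pₙ = 1. -/
theorem mRNA_distribution_normalized
    (k₁m k₁p k₂m k₂p ν : ℝ) (hk₁m : 0 < k₁m) (hk₁p : 0 < k₁p)
    (hk₂m : 0 < k₂m) (hk₂p : 0 < k₂p) (hν : 0 < ν)
    (κ₀ κ₁ κ₂ : ℝ)
    (hκ₀ : κ₀ = (k₁m + k₁p) * k₂m + k₁p * k₂p)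
    (hκ₁ : κ₁ = k₁m + k₁p + k₂m + k₂p)
    (hκ₂ : κ₂ = κ₁ - k₂m)
    (K₁m K₁p K₂m K₂p : ℝ)
    (hK₁m : K₁m = (κ₁ - Real.sqrt (κ₁ ^ 2 - 4 * κ₀)) / 2)
    (hK₁p : K₁p = (κ₁ + Real.sqrt (κ₁ ^ 2 - 4 * κ₀)) / 2)
    (hK₂m : K₂m = (κ₂ - Real.sqrt (κ₂ ^ 2 - 4 * (k₁p * k₂p))) / 2)
    (hK₂p : K₂p = (κ₂ + Real.sqrt (κ₂ ^ 2 - 4 * (k₁p * k₂p))) / 2)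
    (p : ℕ → ℝ)
    (hp : ∀ n : ℕ, p n = (poch K₂m n * poch K₂p n) / (poch K₁m n * poch K₁p n)
      * (ν ^ n / (Nat.factorial n))
      * F22 (K₂m + n) (K₂p + n) (K₁m + n) (K₁p + n) (-ν)) :
    HasSum p 1 := by
  -- discriminants are nonnegative
  have hd₁ : (0:ℝ) ≤ κ₁ ^ 2 - 4 * κ₀ := by nlinarith [sq_nonneg (k₁m + k₁p - k₂m - k₂p)]
  have hd₂ : (0:ℝ) ≤ κ₂ ^ 2 - 4 * (k₁p * k₂p) := by
    nlinarith [sq_nonneg (k₁m + k₁p - k₂p)]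
  have hs₁ : Real.sqrt (κ₁ ^ 2 - 4 * κ₀) ^ 2 = κ₁ ^ 2 - 4 * κ₀ := Real.sq_sqrt hd₁
  have hs₂ : Real.sqrt (κ₂ ^ 2 - 4 * (k₁p * k₂p)) ^ 2 = κ₂ ^ 2 - 4 * (k₁p * k₂p) :=
    Real.sq_sqrt hd₂
  have hκ₁pos : 0 < κ₁ := by nlinarith
  have hκ₂pos : 0 < κ₂ := by nlinarith
  -- positivity of the K's
  have hK₁m_pos : 0 < K₁m := by
    rw [hK₁m]
    have : Real.sqrt (κ₁ ^ 2 - 4 * κ₀) < κ₁ := by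
      rw [Real.sqrt_lt' hκ₁pos]; nlinarith
    linarith
  have hK₁p_pos : 0 < K₁p := by
    rw [hK₁p]
    have := Real.sqrt_nonneg (κ₁ ^ 2 - 4 * κ₀)
    linarith
  have hK₂m_pos : 0 < K₂m := by
    rw [hK₂m]
    have : Real.sqrt (κ₂ ^ 2 - 4 * (k₁p * k₂p)) < κ₂ := by
      rw [Real.sqrt_lt' hκ₂pos]; nlinarith
    linarith
  have hK₂p_pos : 0 < K₂p := by
    rw [hK₂p]
    have := Real.sqrt_nonneg (κ₂ ^ 2 - 4 * (k₁p * k₂p))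
    linarith
  -- sums and products
  have hsum1 : K₁m + K₁p = κ₁ := by rw [hK₁m, hK₁p]; ring
  have hprod1 : K₁m * K₁p = κ₀ := by
    rw [hK₁m, hK₁p]; linear_combination (-1/4 : ℝ) * hs₁
  have hsum2 : K₂m + K₂p = κ₂ := by rw [hK₂m, hK₂p]; ring
  have hprod2 : K₂m * K₂p = k₁p * k₂p := by
    rw [hK₂m, hK₂p]; linear_combination (-1/4 : ℝ) * hs₂
  -- the factor inequality
  have hfac : ∀ x : ℝ, 0 ≤ x → (K₂m + x) * (K₂p + x) ≤ (K₁m + x) * (K₁p + x) := by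
    intro x hx; nlinarith [hsum1, hprod1, hsum2, hprod2]
  -- the coefficient sequence
  set c : ℕ → ℝ := fun m => poch K₂m m * poch K₂p m / (poch K₁m m * poch K₁p m) with hc
  have hc0 : c 0 = 1 := by simp [hc, poch_zero]
  have hden_pos : ∀ m, 0 < poch K₁m m * poch K₁p m := fun m =>
    mul_pos (poch_pos hK₁m_pos m) (poch_pos hK₁p_pos m)
  have hnum_pos : ∀ m, 0 < poch K₂m m * poch K₂p m := fun m =>
    mul_pos (poch_pos hK₂m_pos m) (poch_pos hK₂p_pos m)
  have hle : ∀ m, poch K₂m m * poch K₂p m ≤ poch K₁m m * poch K₁p m := by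
    intro m
    induction m with
    | zero => simp [poch_zero]
    | succ m ih =>
      have e2 : poch K₂m (m+1) * poch K₂p (m+1)
          = (poch K₂m m * poch K₂p m) * ((K₂m + m) * (K₂p + m)) := by
        rw [poch, poch, ascPochhammer_succ_eval, ascPochhammer_succ_eval]; rw [poch, poch]; ring
      have e1 : poch K₁m (m+1) * poch K₁p (m+1)
          = (poch K₁m m * poch K₁p m) * ((K₁m + m) * (K₁p + m)) := by
        rw [poch, poch, ascPochhammer_succ_eval, ascPochhammer_succ_eval]; rw [poch, poch]; ring
      rw [e1, e2]
      have hB : (0:ℝ) ≤ (K₂m + m) * (K₂p + m) := by positivity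
      exact mul_le_mul ih (hfac m (by positivity)) hB (hden_pos m).le
  have hc_pos : ∀ m, 0 < c m := fun m => div_pos (hnum_pos m) (hden_pos m)
  have hc_le : ∀ m, c m ≤ 1 := fun m => (div_le_one (hden_pos m)).mpr (hle m)
  -- the double sequence
  set f : ℕ × ℕ → ℝ :=
    fun q => c (q.1 + q.2) * (ν ^ q.1 / (Nat.factorial q.1)) *
      ((-ν) ^ q.2 / (Nat.factorial q.2)) with hf
  -- summability
  have hbig : Summable (fun q : ℕ × ℕ => (ν ^ q.1 / (Nat.factorial q.1)) *
      (ν ^ q.2 / (Nat.factorial q.2))) :=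
    (Real.summable_pow_div_factorial ν).mul_of_nonneg (Real.summable_pow_div_factorial ν)
      (fun n => by positivity) (fun n => by positivity)
  have habs : ∀ q : ℕ × ℕ, |f q| ≤ (ν ^ q.1 / (Nat.factorial q.1)) *
      (ν ^ q.2 / (Nat.factorial q.2)) := by
    intro q
    have h1 : |f q| = c (q.1 + q.2) * (ν ^ q.1 / (Nat.factorial q.1)) *
        (ν ^ q.2 / (Nat.factorial q.2)) := by
      rw [hf, abs_mul, abs_mul, abs_of_pos (hc_pos _), abs_div, abs_div, abs_pow, abs_pow,
        abs_neg, abs_of_pos hν, Nat.abs_cast, Nat.abs_cast]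
    rw [h1]
    have h2 : (0:ℝ) ≤ (ν ^ q.1 / (Nat.factorial q.1)) * (ν ^ q.2 / (Nat.factorial q.2)) := by
      positivity
    nlinarith [hc_le (q.1 + q.2), hc_pos (q.1 + q.2)]
  have hfsum : Summable f := by
    have : Summable fun q : ℕ × ℕ => |f q| :=
      Summable.of_nonneg_of_le (fun q => abs_nonneg _) habs hbig
    exact this.of_abs
  -- fiberwise sums over the second coordinate equal p n
  have hslice : ∀ n : ℕ, p n = ∑' k : ℕ, f (n, k) := by
    intro n
    rw [hp n, F22, ← tsum_mul_left]
    congr 1 with k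
    have h2m := poch_add K₂m n k
    have h2p := poch_add K₂p n k
    have h1m := poch_add K₁m n k
    have h1p := poch_add K₁p n k
    have hp1m := (poch_pos hK₁m_pos n).ne'
    have hp1p := (poch_pos hK₁p_pos n).ne'
    have hq1m := (poch_pos (by positivity : (0:ℝ) < K₁m + n) k).ne'
    have hq1p := (poch_pos (by positivity : (0:ℝ) < K₁p + n) k).ne'
    have hfn : (Nat.factorial n : ℝ) ≠ 0 := by positivity
    have hfk : (Nat.factorial k : ℝ) ≠ 0 := by positivity
    rw [hf]
    simp only [hc]
    rw [h2m, h2p, h1m, h1p]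
    field_simp
  have hfiber : ∀ n : ℕ, HasSum (fun k => f (n, k)) (p n) := by
    intro n
    rw [hslice n]
    exact (hfsum.prod_factor n).hasSum
  -- compute the total sum via antidiagonals
  have hanti : ∀ m : ℕ, ∑ x ∈ Finset.HasAntidiagonal.antidiagonal m, f x = if m = 0 then 1 else 0 := by
    intro m
    have key : ∑ x ∈ Finset.HasAntidiagonal.antidiagonal m, f x = c m * (ν + (-ν)) ^ m / (Nat.factorial m) := by
      rw [Finset.Nat.sum_antidiagonal_eq_sum_range_succ_mk, add_pow, Finset.mul_sum,
        Finset.sum_div]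
      refine Finset.sum_congr rfl ?_
      intro i hi
      have him : i ≤ m := Nat.lt_succ_iff.mp (Finset.mem_range.mp hi)
      have hadd : i + (m - i) = m := Nat.add_sub_cancel' him
      have hch : (Nat.choose m i : ℝ) * (Nat.factorial i) * (Nat.factorial (m - i))
          = Nat.factorial m := by
        exact_mod_cast congrArg (Nat.cast : ℕ → ℝ)
          (Nat.choose_mul_factorial_mul_factorial him)
      have hfi : (Nat.factorial i : ℝ) ≠ 0 := by positivity
      have hfmi : (Nat.factorial (m - i) : ℝ) ≠ 0 := by positivity
      have hfm : (Nat.factorial m : ℝ) ≠ 0 := by positivity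
      have hchr : (Nat.choose m i : ℝ)
          = (Nat.factorial m) / ((Nat.factorial i) * (Nat.factorial (m - i))) := by
        field_simp
        linear_combination hch
      rw [hf]
      simp only [hadd]
      rw [hchr]
      field_simp
    rw [key]
    cases m with
    | zero => simp [hc0]
    | succ m => simp
  -- assemble
  have hsigma : HasSum (fun x : Σ m : ℕ, (Finset.HasAntidiagonal.antidiagonal m : Finset (ℕ × ℕ)) =>
      f (Finset.HasAntidiagonal.sigmaAntidiagonalEquivProd x)) (∑' q, f q) :=
    (Finset.HasAntidiagonal.sigmaAntidiagonalEquivProd.hasSum_iff).mpr hfsum.hasSum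
  have hfib2 : ∀ m : ℕ, HasSum
      (fun x : (Finset.HasAntidiagonal.antidiagonal m : Finset (ℕ × ℕ)) =>
        f (Finset.HasAntidiagonal.sigmaAntidiagonalEquivProd ⟨m, x⟩)) (if m = 0 then 1 else 0) := by
    intro m
    have h0 : (fun x : (Finset.HasAntidiagonal.antidiagonal m : Finset (ℕ × ℕ)) =>
        f (Finset.HasAntidiagonal.sigmaAntidiagonalEquivProd ⟨m, x⟩)) = fun x => f x.val := rfl
    rw [h0, ← hanti m, ← Finset.sum_coe_sort (Finset.HasAntidiagonal.antidiagonal m) f]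
    exact hasSum_fintype _
  have hg : HasSum (fun m : ℕ => if m = 0 then (1:ℝ) else 0) (∑' q, f q) :=
    HasSum.sigma hsigma hfib2
  have hone : HasSum (fun m : ℕ => if m = 0 then (1:ℝ) else 0) 1 := by
    simpa using hasSum_ite_eq (0 : ℕ) (1 : ℝ)
  have htsum : (∑' q, f q) = 1 := hg.unique hone
  have hftot : HasSum f 1 := htsum ▸ hfsum.hasSum
  exact hftot.prod_fiberwise hfiber
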